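/- Let γ and γ_i (i ≥ 1) be ℝ^k-valued measures on [0,T] such that (γ_i, |γ_i|) ⇀* (γ, λ) for some finite nonnegative Borel measure λ on [0,T]. Then there exists a Borel set ℰ ⊆ [0,T] containing T, with [0,T] ∖ ℰ at most countable, such that for every integer n ≥ 1 and every continuous function Ψ : [0,T] → ℝ^{n×k} one has lim_i ∫_{[0,t]} Ψ(s)·γ_i(ds) = ∫_{[0,t]} Ψ(s)·γ(ds) for all t ∈ ℰ. (ℰ can be taken to consist of T together with all t with λ({t}) = 0.) -/

import Mathlib

open MeasureTheory Set Filter Topology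

noncomputable section

/-- Integral of a scalar function against a signed measure
(via its Jordan decomposition). -/
def sInt (γ : SignedMeasure ℝ) (B : Set ℝ) (φ : ℝ → ℝ) : ℝ :=
  (∫ t in B, φ t ∂γ.toJordanDecomposition.posPart) -
    ∫ t in B, φ t ∂γ.toJordanDecomposition.negPart

/-- Total-variation measure `|γ| = Σ_j (γ^j₊ + γ^j₋)` of an ℝᵏ-valued measure. -/
def tvm {k : ℕ} (γ : Fin k → SignedMeasure ℝ) : Measure ℝ := ∑ j, (γ j).totalVariation

/-! At a time `t < T` that is not an atom of `λ`, the indicator of `[0, t]` is replaced by a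
continuous cutoff `χ` equal to `1` up to `t` and to `0` after `t + δ`. Against any `γ`, this
changes `∫_{[0,t]} φ dγ` by at most `sup |φ| · |γ|((t, t + δ])`. For the limit `γ` this is small
for small `δ`; for the `γ_i` it is bounded by the integral of a continuous bump against `|γ_i|`,
whose limit is at most `λ((t - δ, t + δ))`, which is small because `λ{t} = 0`. At `t = T` the
convergence is the hypothesis itself, and `λ` has only countably many atoms. -/

open scoped ENNReal

theorem tendsto_of_forall_approx {ι α : Type*} [PseudoMetricSpace α] {l : Filter ι}
    {x : ι → α} {x₀ : α}
    (h : ∀ ε > 0, ∃ (a : ι → α) (a₀ : α), Tendsto a l (𝓝 a₀) ∧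
      (∀ᶠ i in l, dist (x i) (a i) ≤ ε) ∧ dist x₀ a₀ ≤ ε) :
    Tendsto x l (𝓝 x₀) := by
  refine Metric.tendsto_nhds.mpr fun ε hε => ?_
  obtain ⟨a, a₀, ha, hxa, hx₀a₀⟩ := h (ε / 3) (by positivity)
  filter_upwards [hxa, Metric.tendsto_nhds.mp ha (ε / 3) (by positivity)] with i hxai hai
  calc dist (x i) x₀ ≤ dist (x i) (a i) + dist (a i) a₀ + dist a₀ x₀ := dist_triangle4 _ _ _ _
    _ < ε := by rw [dist_comm a₀]; linarith

theorem MeasureTheory.Measure.countable_setOf_measure_singleton_pos {α : Type*}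
    [MeasurableSpace α] [MeasurableSingletonClass α] (μ : Measure α) [SFinite μ] :
    {x : α | 0 < μ {x}}.Countable :=
  Measure.countable_meas_pos_of_disjoint_iUnion (fun _ => measurableSet_singleton _)
    fun _ _ hxy => disjoint_singleton.mpr hxy

theorem tendsto_measure_Ioc_nhdsGT_zero (μ : Measure ℝ) [IsFiniteMeasureOnCompacts μ] (t : ℝ) :
    Tendsto (fun δ => μ (Ioc t (t + δ))) (𝓝[>] 0) (𝓝 0) := by
  have hempty : ⋂ δ > (0 : ℝ), Ioc t (t + δ) = ∅ := by
    refine eq_empty_of_forall_notMem fun s hs => ?_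
    have hts : t < s := (mem_iInter₂.mp hs 1 one_pos).1
    have := (mem_iInter₂.mp hs ((s - t) / 2) (by linarith)).2
    linarith
  have := tendsto_measure_biInter_gt (μ := μ) (s := fun δ => Ioc t (t + δ)) (a := 0)
    (fun _ _ => nullMeasurableSet_Ioc) (fun _ _ _ hij => Ioc_subset_Ioc_right (by linarith))
    ⟨1, one_pos, measure_Ioc_lt_top.ne⟩
  rwa [hempty, measure_empty] at this

theorem exists_pos_measure_Icc_lt_and_measure_Ioc_lt (μ ν : Measure ℝ)
    [IsFiniteMeasureOnCompacts μ] [IsFiniteMeasureOnCompacts ν] {t b : ℝ} (hb : 0 < b)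
    (hμ : μ {t} = 0) {ε : ℝ≥0∞} (hε : 0 < ε) :
    ∃ δ ∈ Ioc 0 b, μ (Icc (t - δ) (t + δ)) < ε ∧ ν (Ioc t (t + δ)) < ε := by
  have hμδ := (tendsto_measure_Icc_nhdsWithin_right' μ t).eventually_lt_const (hμ ▸ hε)
  have hνδ := (tendsto_measure_Ioc_nhdsGT_zero ν t).eventually_lt_const hε
  have hδb : ∀ᶠ δ in 𝓝[>] (0 : ℝ), δ ≤ b := nhdsWithin_le_nhds (eventually_le_nhds hb)
  obtain ⟨δ, hδ, hδb, hμδ, hνδ⟩ := (eventually_mem_nhdsWithin.and (hδb.and (hμδ.and hνδ))).exists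
  exact ⟨δ, ⟨hδ, hδb⟩, hμδ, hνδ⟩

theorem measureReal_le_setIntegral_of_eqOn_one {α : Type*} [MeasurableSpace α] (μ : Measure α)
    {A K : Set α} {ρ : α → ℝ} (hA : MeasurableSet A) (hAK : A ⊆ K) (hρA : EqOn ρ 1 A)
    (hρ : ∀ x, 0 ≤ ρ x) (hint : IntegrableOn ρ K μ) : μ.real A ≤ ∫ x in K, ρ x ∂μ :=
  calc μ.real A = ∫ x in A, ρ x ∂μ := by simp [setIntegral_congr_fun hA hρA]
    _ ≤ ∫ x in K, ρ x ∂μ :=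
      setIntegral_mono_set hint (Eventually.of_forall hρ) hAK.eventuallyLE

theorem setIntegral_le_measureReal_of_eqOn_zero {α : Type*} [MeasurableSpace α] (μ : Measure α)
    {U K : Set α} {ρ : α → ℝ} (hU : MeasurableSet U) (hμU : μ U ≠ ⊤) (hρU : EqOn ρ 0 Uᶜ)
    (hρ : ∀ x, ρ x ≤ 1) (hint : IntegrableOn ρ K μ) : ∫ x in K, ρ x ∂μ ≤ μ.real U := by
  have hρ_le : ∀ x, ρ x ≤ U.indicator 1 x := fun x => by
    by_cases hx : x ∈ U
    · simp [hx, hρ x]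
    · simp [hx, hρU hx]
  calc ∫ x in K, ρ x ∂μ ≤ ∫ x in K, U.indicator 1 x ∂μ :=
        integral_mono hint ((integrable_indicator_iff hU).mpr
          (integrableOn_const hμU)).integrableOn hρ_le
    _ = (μ.restrict K).real U := integral_indicator_one hU
    _ ≤ μ.real U := ENNReal.toReal_mono hμU (Measure.restrict_le_self U)

theorem eventually_measureReal_lt_of_tendsto_setIntegral {X ι : Type*} [TopologicalSpace X]
    [NormalSpace X] [T2Space X] [MeasurableSpace X] [OpensMeasurableSpace X] {l : Filter ι}
    {μ : ι → Measure X} [∀ i, IsFiniteMeasureOnCompacts (μ i)] {lam : Measure X}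
    [IsFiniteMeasureOnCompacts lam] {K : Set X} (hK : IsCompact K)
    (hμ : ∀ φ : X → ℝ, ContinuousOn φ K →
      Tendsto (fun i => ∫ x in K, φ x ∂μ i) l (𝓝 (∫ x in K, φ x ∂lam)))
    {A U : Set X} (hA : IsClosed A) (hAK : A ⊆ K) (hU : IsOpen U) (hAU : A ⊆ U) {η : ℝ}
    (hlamU : lam U < ENNReal.ofReal η) : ∀ᶠ i in l, (μ i).real A < η := by
  obtain ⟨ρ, hρ0, hρ1, hρI⟩ := exists_continuous_zero_one_of_isClosed hU.isClosed_compl hA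
    (disjoint_compl_left_iff_subset.mpr hAU)
  have hρint (m : Measure X) [IsFiniteMeasureOnCompacts m] : IntegrableOn ρ K m :=
    ρ.continuous.continuousOn.integrableOn_compact hK
  have hρlam : ∫ x in K, ρ x ∂lam < η :=
    (setIntegral_le_measureReal_of_eqOn_zero lam hU.measurableSet hlamU.ne_top hρ0
      (fun x => (hρI x).2) (hρint lam)).trans_lt (ENNReal.toReal_lt_of_lt_ofReal hlamU)
  filter_upwards [(hμ ρ ρ.continuous.continuousOn).eventually_lt_const hρlam] with i hi
  exact (measureReal_le_setIntegral_of_eqOn_one _ hA.measurableSet hAK hρ1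
    (fun x => (hρI x).1) (hρint (μ i))).trans_lt hi

theorem setIntegral_Icc_eq_add_of_eqOn (μ : Measure ℝ) {a t u b : ℝ} (hat : a ≤ t)
    (htu : t ≤ u) (hub : u ≤ b) {f g : ℝ → ℝ} (hg : IntegrableOn g (Icc a b) μ)
    (hgf : EqOn g f (Icc a t)) (hg0 : EqOn g 0 (Ioc u b)) :
    ∫ s in Icc a b, g s ∂μ = (∫ s in Icc a t, f s ∂μ) + ∫ s in Ioc t u, g s ∂μ := by
  have hdisj {x y z : ℝ} : Disjoint (Icc x y) (Ioc y z) :=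
    (Iic_disjoint_Ioc le_rfl).mono_left Icc_subset_Iic_self
  have hIoc {x y : ℝ} (hx : a ≤ x) (hy : y ≤ b) : IntegrableOn g (Ioc x y) μ :=
    hg.mono_set (Ioc_subset_Icc_self.trans (Icc_subset_Icc hx hy))
  rw [← Icc_union_Ioc_eq_Icc (hat.trans htu) hub, setIntegral_union hdisj measurableSet_Ioc
      (hg.mono_set (Icc_subset_Icc_right hub)) (hIoc (hat.trans htu) le_rfl),
    ← Icc_union_Ioc_eq_Icc hat htu, setIntegral_union hdisj measurableSet_Ioc
      (hg.mono_set (Icc_subset_Icc_right (htu.trans hub))) (hIoc hat hub),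
    setIntegral_congr_fun measurableSet_Icc hgf,
    setIntegral_eq_zero_of_forall_eq_zero fun s hs => hg0 hs, add_zero]

theorem sInt_Icc_eq_add_of_eqOn (ν : SignedMeasure ℝ) {a t u b : ℝ} (hat : a ≤ t)
    (htu : t ≤ u) (hub : u ≤ b) {f g : ℝ → ℝ} (hg : ContinuousOn g (Icc a b))
    (hgf : EqOn g f (Icc a t)) (hg0 : EqOn g 0 (Ioc u b)) :
    sInt ν (Icc a b) g = sInt ν (Icc a t) f + sInt ν (Ioc t u) g := by
  simp only [sInt, setIntegral_Icc_eq_add_of_eqOn _ hat htu hub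
    (hg.integrableOn_compact isCompact_Icc) hgf hg0]
  ring

theorem abs_sInt_le (ν : SignedMeasure ℝ) {A : Set ℝ} {f : ℝ → ℝ} {C : ℝ}
    (hC : ∀ x ∈ A, |f x| ≤ C) : |sInt ν A f| ≤ C * ν.totalVariation.real A := by
  have hbound (μ : Measure ℝ) [IsFiniteMeasure μ] : ‖∫ x in A, f x ∂μ‖ ≤ C * μ.real A :=
    norm_setIntegral_le_of_norm_le_const (measure_lt_top μ A) hC
  calc |sInt ν A f|
      ≤ ‖∫ x in A, f x ∂ν.toJordanDecomposition.posPart‖ +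
        ‖∫ x in A, f x ∂ν.toJordanDecomposition.negPart‖ := abs_sub _ _
    _ ≤ C * ν.toJordanDecomposition.posPart.real A +
        C * ν.toJordanDecomposition.negPart.real A := add_le_add (hbound _) (hbound _)
    _ = C * ν.totalVariation.real A := by
      rw [SignedMeasure.totalVariation, measureReal_add_apply, mul_add]

theorem abs_sInt_Icc_sub_sInt_mul_le (ν : SignedMeasure ℝ) {a t u b C : ℝ} (hat : a ≤ t)
    (htu : t ≤ u) (hub : u ≤ b) {φ χ : ℝ → ℝ} (hφ : ContinuousOn φ (Icc a b))
    (hC : ∀ s ∈ Icc a b, |φ s| ≤ C) (hχ : Continuous χ) (hχ1 : EqOn χ 1 (Iic t))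
    (hχ0 : EqOn χ 0 (Ici u)) (hχI : ∀ s, χ s ∈ Icc 0 1) :
    |sInt ν (Icc a t) φ - sInt ν (Icc a b) (fun s => φ s * χ s)| ≤
      C * ν.totalVariation.real (Ioc t u) := by
  rw [sInt_Icc_eq_add_of_eqOn ν hat htu hub (f := φ) (g := fun s => φ s * χ s)
      (hφ.mul hχ.continuousOn) (fun s hs => by simp [hχ1 hs.2]) (fun s hs => by simp [hχ0 hs.1.le]),
    sub_add_cancel_left, abs_neg]
  refine abs_sInt_le ν fun s hs => ?_
  have hs' : s ∈ Icc a b := ⟨hat.trans hs.1.le, hs.2.trans hub⟩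
  rw [abs_mul, abs_of_nonneg (hχI s).1]
  exact (mul_le_of_le_one_right (abs_nonneg _) (hχI s).2).trans (hC s hs')

instance {k : ℕ} (γ : Fin k → SignedMeasure ℝ) : IsFiniteMeasure (tvm γ) := by
  unfold tvm; infer_instance

theorem totalVariation_le_tvm {k : ℕ} (γ : Fin k → SignedMeasure ℝ) (j : Fin k) :
    (γ j).totalVariation ≤ tvm γ :=
  Finset.single_le_sum (fun _ _ => Measure.zero_le _) (Finset.mem_univ j)

theorem tendsto_sInt_Icc_of_measure_singleton_eq_zero {ι : Type*} {l : Filter ι}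
    {ν : ι → SignedMeasure ℝ} {ν₀ : SignedMeasure ℝ} {μ : ι → Measure ℝ}
    [∀ i, IsFiniteMeasureOnCompacts (μ i)] {lam : Measure ℝ} [IsFiniteMeasureOnCompacts lam]
    {T : ℝ}
    (hν : ∀ φ : ℝ → ℝ, ContinuousOn φ (Icc 0 T) →
      Tendsto (fun i => sInt (ν i) (Icc 0 T) φ) l (𝓝 (sInt ν₀ (Icc 0 T) φ)))
    (hμ : ∀ φ : ℝ → ℝ, ContinuousOn φ (Icc 0 T) →
      Tendsto (fun i => ∫ s in Icc 0 T, φ s ∂μ i) l (𝓝 (∫ s in Icc 0 T, φ s ∂lam)))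
    (hνμ : ∀ i, (ν i).totalVariation ≤ μ i) {t : ℝ} (ht : 0 ≤ t) (htT : t < T)
    (hlam : lam {t} = 0) {φ : ℝ → ℝ} (hφ : ContinuousOn φ (Icc 0 T)) :
    Tendsto (fun i => sInt (ν i) (Icc 0 t) φ) l (𝓝 (sInt ν₀ (Icc 0 t) φ)) := by
  obtain ⟨C, hC⟩ := isCompact_Icc.exists_bound_of_continuousOn hφ
  have hC0 : 0 ≤ C := (norm_nonneg _).trans (hC 0 ⟨le_rfl, ht.trans htT.le⟩)
  refine tendsto_of_forall_approx fun ε hε => ?_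
  obtain ⟨η, hη, hCη⟩ : ∃ η > 0, C * η ≤ ε :=
    ⟨ε / (C + 1), by positivity, by rw [← mul_div_assoc, div_le_iff₀ (by positivity)]; nlinarith⟩
  obtain ⟨δ, ⟨hδ, hδT⟩, hlamδ, hν₀δ⟩ := exists_pos_measure_Icc_lt_and_measure_Ioc_lt lam
    ν₀.totalVariation (sub_pos.mpr htT) hlam (ENNReal.ofReal_pos.mpr hη)
  replace hδT : t + δ ≤ T := by linarith
  obtain ⟨χ, hχ0, hχ1, hχI⟩ := exists_continuous_zero_one_of_isClosed
    (isClosed_Ici (a := t + δ / 2)) (isClosed_Iic (a := t)) (Ici_disjoint_Iic.mpr (by linarith))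
  have hcut (ν' : SignedMeasure ℝ) :=
    abs_sInt_Icc_sub_sInt_mul_le ν' ht (by linarith : t ≤ t + δ / 2) (by linarith) hφ hC
      χ.continuous hχ1 hχ0 hχI
  have hμδ : ∀ᶠ i in l, (μ i).real (Icc t (t + δ / 2)) < η :=
    eventually_measureReal_lt_of_tendsto_setIntegral isCompact_Icc hμ isClosed_Icc
      (Icc_subset_Icc ht (by linarith)) isOpen_Ioo (Icc_subset_Ioo (by linarith) (by linarith))
      ((measure_mono Ioo_subset_Icc_self).trans_lt hlamδ)
  refine ⟨fun i => sInt (ν i) (Icc 0 T) (fun s => φ s * χ s),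
    sInt ν₀ (Icc 0 T) (fun s => φ s * χ s), hν _ (hφ.mul χ.continuous.continuousOn), ?_, ?_⟩
  · filter_upwards [hμδ] with i hi
    calc dist (sInt (ν i) (Icc 0 t) φ) (sInt (ν i) (Icc 0 T) fun s => φ s * χ s)
        ≤ C * (ν i).totalVariation.real (Ioc t (t + δ / 2)) := hcut (ν i)
      _ ≤ C * (μ i).real (Icc t (t + δ / 2)) := by
          gcongr
          exact (measureReal_mono Ioc_subset_Icc_self).trans
            (ENNReal.toReal_mono measure_Icc_lt_top.ne (hνμ i _))
      _ ≤ C * η := by gcongr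
      _ ≤ ε := hCη
  · calc dist (sInt ν₀ (Icc 0 t) φ) (sInt ν₀ (Icc 0 T) fun s => φ s * χ s)
        ≤ C * ν₀.totalVariation.real (Ioc t (t + δ / 2)) := hcut ν₀
      _ ≤ C * ν₀.totalVariation.real (Ioc t (t + δ)) :=
          mul_le_mul_of_nonneg_left (measureReal_mono (Ioc_subset_Ioc_right (by linarith))) hC0
      _ ≤ C * η := by gcongr; exact (ENNReal.toReal_lt_of_lt_ofReal hν₀δ).le
      _ ≤ ε := hCη

theorem primitive_convergence_of_joint_weakStar_general
    (T : ℝ) (hT : 0 < T) (k : ℕ)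
    (γi : ℕ → Fin k → SignedMeasure ℝ) (γ : Fin k → SignedMeasure ℝ)
    -- (γ_i, |γ_i|) ⇀* (γ, λ)
    (lam : Measure ℝ) (hlamfin : IsFiniteMeasure lam)
    (hγconv : ∀ j, ∀ φ : ℝ → ℝ, ContinuousOn φ (Icc 0 T) →
      Tendsto (fun i => sInt (γi i j) (Icc 0 T) φ) atTop
        (nhds (sInt (γ j) (Icc 0 T) φ)))
    (htvconv : ∀ φ : ℝ → ℝ, ContinuousOn φ (Icc 0 T) →
      Tendsto (fun i => ∫ t in Icc 0 T, φ t ∂(tvm (γi i))) atTop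
        (nhds (∫ t in Icc 0 T, φ t ∂lam))) :
    ∃ E : Set ℝ, E ⊆ Icc 0 T ∧ T ∈ E ∧ (Icc 0 T \ E).Countable ∧
      -- ℰ can be taken to consist of T together with the non-atoms of λ in [0,T]
      E = insert T {t ∈ Icc 0 T | lam {t} = 0} ∧
      ∀ n : ℕ, 1 ≤ n → ∀ Ψ : ℝ → Matrix (Fin n) (Fin k) ℝ,
        ContinuousOn Ψ (Icc 0 T) → ∀ t ∈ E, ∀ l : Fin n,
          Tendsto (fun i => ∑ j, sInt (γi i j) (Icc 0 t) (fun s => Ψ s l j)) atTop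
            (nhds (∑ j, sInt (γ j) (Icc 0 t) (fun s => Ψ s l j))) := by
  refine ⟨_, insert_subset ⟨hT.le, le_rfl⟩ (sep_subset _ _), mem_insert _ _, ?_, rfl, ?_⟩
  · refine lam.countable_setOf_measure_singleton_pos.mono fun t ⟨htI, htE⟩ => ?_
    exact pos_iff_ne_zero.mpr fun h => htE (Or.inr ⟨htI, h⟩)
  · intro n _ Ψ hΨ t ht l
    refine tendsto_finsetSum _ fun j _ => ?_
    have hφ : ContinuousOn (fun s => Ψ s l j) (Icc 0 T) :=
      (continuous_id.matrix_elem l j).comp_continuousOn hΨ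
    rcases ht with rfl | ⟨⟨ht0, htT⟩, hlam⟩
    · exact hγconv j _ hφ
    rcases htT.lt_or_eq with htT | rfl
    · exact tendsto_sInt_Icc_of_measure_singleton_eq_zero (hγconv j) htvconv
        (fun i => totalVariation_le_tvm (γi i) j) ht0 htT hlam hφ
    · exact hγconv j _ hφ

/-- **Convergence of primitives against continuous integrands from joint weak-*
convergence** (Lemma 2.7 (ii)). If (γ_i,|γ_i|) ⇀* (γ,λ), then outside an at most
countable set (the atoms of λ, except T), the integrals `∫_{[0,t]} Ψ·γ_i(ds)` converge
to `∫_{[0,t]} Ψ·γ(ds)` for every continuous matrix-valued Ψ. -/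
theorem primitive_convergence_of_joint_weakStar
    (T : ℝ) (hT : 0 < T) (k : ℕ)
    (γi : ℕ → Fin k → SignedMeasure ℝ) (γ : Fin k → SignedMeasure ℝ)
    -- measures on [0,T]
    (hsupp : ∀ i j, ∀ B : Set ℝ, MeasurableSet B → Disjoint B (Icc 0 T) → γi i j B = 0)
    (hsupp0 : ∀ j, ∀ B : Set ℝ, MeasurableSet B → Disjoint B (Icc 0 T) → γ j B = 0)
    -- (γ_i, |γ_i|) ⇀* (γ, λ)
    (lam : Measure ℝ) (hlamfin : IsFiniteMeasure lam)
    (hγconv : ∀ j, ∀ φ : ℝ → ℝ, ContinuousOn φ (Icc 0 T) →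
      Tendsto (fun i => sInt (γi i j) (Icc 0 T) φ) atTop
        (nhds (sInt (γ j) (Icc 0 T) φ)))
    (htvconv : ∀ φ : ℝ → ℝ, ContinuousOn φ (Icc 0 T) →
      Tendsto (fun i => ∫ t in Icc 0 T, φ t ∂(tvm (γi i))) atTop
        (nhds (∫ t in Icc 0 T, φ t ∂lam))) :
    ∃ E : Set ℝ, E ⊆ Icc 0 T ∧ T ∈ E ∧ (Icc 0 T \ E).Countable ∧
      -- ℰ can be taken to consist of T together with the non-atoms of λ in [0,T]
      E = insert T {t ∈ Icc 0 T | lam {t} = 0} ∧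
      ∀ n : ℕ, 1 ≤ n → ∀ Ψ : ℝ → Matrix (Fin n) (Fin k) ℝ,
        ContinuousOn Ψ (Icc 0 T) → ∀ t ∈ E, ∀ l : Fin n,
          Tendsto (fun i => ∑ j, sInt (γi i j) (Icc 0 t) (fun s => Ψ s l j)) atTop
            (nhds (∑ j, sInt (γ j) (Icc 0 t) (fun s => Ψ s l j))) :=
  primitive_convergence_of_joint_weakStar_general T hT k γi γ lam hlamfin hγconv htvconv

end
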